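/- Let p > 7 be a prime with binary expansion p = 2^{e_1} + 2^{e_2} + ⋯ + 2^{e_N} + 1, where N ≥ 1 and e_1 > e_2 > ⋯ > e_N > 0, and suppose that either N = 1 or e_1 − e_2 > 2. Then, as real numbers, (3 + 2·l(p))/2^{3 + l(p)} < (t(p) + 2·l(p) − 1)/p < (3 + 2·l(p))/2^{2 + l(p)}, where l(p) and t(p) are the length and tail of the sequence of lower halves of p. -/

import Mathlib

/-!
Write `k = e 0`. The gap condition keeps the lower part of the expansion small:
`∑_{i ≥ 1} 2 ^ e i + 1 < 2 ^ (k - 2)`, so `2 ^ k < p < 5 * 2 ^ (k - 2)`. Then `⌊p / 2 ^ i⌋`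
first drops into `{2, 3, 4}` at `i = k - 2`, with value `4`; so `l(p) = k - 2`, `t(p) = 4`, and
both bounds reduce to `2 ^ (l + 2) < p < 2 ^ (l + 3)`.
-/

/-- The lower half of a positive integer: `lh m = ⌊m/2⌋`. -/
def lh (m : ℕ) : ℕ := m / 2

/-- The length of the sequence of lower halves of `n`: the least positive `i`
such that the `i`-th iterate of `lh` at `n` lies in `{2, 3, 4}`. -/
noncomputable def lhLen (n : ℕ) : ℕ :=
  sInf {i : ℕ | 0 < i ∧ lh^[i] n ∈ ({2, 3, 4} : Set ℕ)}

/-- The tail of the sequence of lower halves of `n`: its last term. -/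
noncomputable def lhTail (n : ℕ) : ℕ := lh^[lhLen n] n

lemma lh_iterate (n i : ℕ) : lh^[i] n = n / 2 ^ i := by
  induction i with
  | zero => simp
  | succ i ih => rw [Function.iterate_succ_apply', ih, lh, Nat.div_div_eq_div_mul, pow_succ]

lemma lhLen_eq_of_div_pow_eq_four {n m : ℕ} (hm : 0 < m) (h : n / 2 ^ m = 4) :
    lhLen n = m := by
  have hmem : m ∈ {i : ℕ | 0 < i ∧ lh^[i] n ∈ ({2, 3, 4} : Set ℕ)} := by
    simp [hm, lh_iterate, h]
  refine le_antisymm (Nat.sInf_le hmem) (le_csInf ⟨m, hmem⟩ ?_)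
  rintro i ⟨-, hi⟩
  rw [lh_iterate] at hi
  have hi4 : n / 2 ^ i < 5 := by simp only [Set.mem_insert_iff, Set.mem_singleton_iff] at hi; omega
  have hlt : 4 * 2 ^ m < 8 * 2 ^ i := calc
    4 * 2 ^ m ≤ n := by simpa [h] using Nat.div_mul_le_self n (2 ^ m)
    _ < 5 * 2 ^ i := (Nat.div_lt_iff_lt_mul (by positivity)).mp hi4
    _ ≤ 8 * 2 ^ i := by omega
  have hpow : 2 ^ (m + 2) < 2 ^ (i + 3) := by rw [pow_add, pow_add]; linarith
  have hexp := (Nat.pow_lt_pow_iff_right (by norm_num)).mp hpow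
  omega

lemma lhTail_eq_four_of_div_pow_eq_four {n m : ℕ} (hm : 0 < m) (h : n / 2 ^ m = 4) :
    lhTail n = 4 := by
  rw [lhTail, lhLen_eq_of_div_pow_eq_four hm h, lh_iterate, h]

lemma sum_two_pow_add_one_lt {s : Finset ℕ} {m : ℕ} (hm : 0 < m) (hpos : ∀ i ∈ s, 0 < i)
    (hlt : ∀ i ∈ s, i < m) : ∑ i ∈ s, 2 ^ i + 1 < 2 ^ m := by
  have hS : ∑ i ∈ s, 2 ^ i < 2 ^ m := Nat.geomSum_lt le_rfl hlt
  obtain ⟨a, ha⟩ : Even (∑ i ∈ s, 2 ^ i) :=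
    Finset.even_sum _ fun i hi => Nat.even_pow.mpr ⟨even_two, (hpos i hi).ne'⟩
  obtain ⟨b, hb⟩ : Even (2 ^ m) := Nat.even_pow.mpr ⟨even_two, hm.ne'⟩
  omega

lemma sum_Ico_two_pow_add_one_lt_of_gap {N : ℕ} {e : ℕ → ℕ}
    (hanti : ∀ i j : ℕ, i < j → j < N → e j < e i) (hpos : ∀ i : ℕ, i < N → 0 < e i)
    (hgap : N = 1 ∨ e 1 + 2 < e 0) (he : 3 ≤ e 0) :
    ∑ i ∈ Finset.Ico 1 N, 2 ^ e i + 1 < 2 ^ (e 0 - 2) := by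
  have hinj : Set.InjOn e (Finset.Ico 1 N) := fun i hi j hj hij => by
    simp only [Finset.coe_Ico, Set.mem_Ico] at hi hj
    rcases lt_trichotomy i j with h | h | h
    · exact absurd hij (hanti i j h hj.2).ne'
    · exact h
    · exact absurd hij (hanti j i h hi.2).ne
  rw [← Finset.sum_image hinj]
  refine sum_two_pow_add_one_lt (by omega) ?_ ?_ <;>
    simp only [Finset.mem_image, Finset.mem_Ico, forall_exists_index, and_imp] <;>
    rintro _ i hi1 hiN rfl
  · exact hpos i hiN
  · have hle : e i ≤ e 1 := by
      rcases hi1.eq_or_lt with rfl | h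
      · exact le_rfl
      · exact (hanti 1 i h hiN).le
    omega

lemma bounds_of_binary_expansion_of_gap (p N : ℕ) (e : ℕ → ℕ) (h7 : 7 < p) (hN : 1 ≤ N)
    (hanti : ∀ i j : ℕ, i < j → j < N → e j < e i) (hpos : ∀ i : ℕ, i < N → 0 < e i)
    (hexp : p = (∑ i ∈ Finset.range N, 2 ^ e i) + 1) (hgap : N = 1 ∨ e 1 + 2 < e 0) :
    3 ≤ e 0 ∧ 2 ^ e 0 < p ∧ p < 5 * 2 ^ (e 0 - 2) := by
  rw [Finset.sum_range_eq_add_Ico _ hN] at hexp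
  have he : 3 ≤ e 0 := by
    rcases hN.eq_or_lt with rfl | hN2
    · by_contra! h
      interval_cases h0 : e 0 <;> simp_all
    · have he1 := hpos 1 hN2
      omega
  have htail := sum_Ico_two_pow_add_one_lt_of_gap hanti hpos hgap he
  have hlead : 2 ^ e 0 = 4 * 2 ^ (e 0 - 2) := by
    rw [← pow_sub_mul_pow 2 (show 2 ≤ e 0 by omega)]; ring
  exact ⟨he, by omega, by omega⟩

lemma lh_ratio_bounds {n m : ℕ} (hm : 0 < m) (hlo : 2 ^ (m + 2) < n) (hhi : n < 5 * 2 ^ m) :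
    (3 + 2 * (lhLen n : ℝ)) / 2 ^ (3 + lhLen n)
        < ((lhTail n : ℝ) + 2 * (lhLen n : ℝ) - 1) / (n : ℝ) ∧
      ((lhTail n : ℝ) + 2 * (lhLen n : ℝ) - 1) / (n : ℝ)
        < (3 + 2 * (lhLen n : ℝ)) / 2 ^ (2 + lhLen n) := by
  rw [pow_add] at hlo
  have hdiv : n / 2 ^ m = 4 := Nat.div_eq_of_lt_le (by omega) (by omega)
  rw [lhTail_eq_four_of_div_pow_eq_four hm hdiv, lhLen_eq_of_div_pow_eq_four hm hdiv]
  have hlo' : (2 : ℝ) ^ (2 + m) < n := by rw [add_comm, pow_add]; exact_mod_cast hlo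
  have hhi' : (n : ℝ) < 2 ^ (3 + m) := by rw [pow_add]; exact_mod_cast (by omega : n < 8 * 2 ^ m)
  have hnum : (4 : ℝ) + 2 * m - 1 = 3 + 2 * m := by ring
  push_cast
  rw [hnum]
  exact ⟨div_lt_div_of_pos_left (by positivity) (lt_trans (by positivity) hlo') hhi',
    div_lt_div_of_pos_left (by positivity) (by positivity) hlo'⟩

theorem ratio_bounds_of_gap_large_general (p N : ℕ) (e : ℕ → ℕ) (h7 : 7 < p)
    (hN : 1 ≤ N)
    (hanti : ∀ i j : ℕ, i < j → j < N → e j < e i)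
    (hpos : ∀ i : ℕ, i < N → 0 < e i)
    (hexp : p = (∑ i ∈ Finset.range N, 2 ^ e i) + 1)
    (hgap : N = 1 ∨ e 1 + 2 < e 0) :
    (3 + 2 * (lhLen p : ℝ)) / 2 ^ (3 + lhLen p)
        < ((lhTail p : ℝ) + 2 * (lhLen p : ℝ) - 1) / (p : ℝ) ∧
      ((lhTail p : ℝ) + 2 * (lhLen p : ℝ) - 1) / (p : ℝ)
        < (3 + 2 * (lhLen p : ℝ)) / 2 ^ (2 + lhLen p) := by
  obtain ⟨he, hlo, hhi⟩ := bounds_of_binary_expansion_of_gap p N e h7 hN hanti hpos hexp hgap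
  refine lh_ratio_bounds (m := e 0 - 2) (by omega) ?_ hhi
  rwa [Nat.sub_add_cancel (by omega)]

theorem ratio_bounds_of_gap_large (p N : ℕ) (e : ℕ → ℕ) (hp : p.Prime) (h7 : 7 < p)
    (hN : 1 ≤ N)
    (hanti : ∀ i j : ℕ, i < j → j < N → e j < e i)
    (hpos : ∀ i : ℕ, i < N → 0 < e i)
    (hexp : p = (∑ i ∈ Finset.range N, 2 ^ e i) + 1)
    (hgap : N = 1 ∨ e 1 + 2 < e 0) :
    (3 + 2 * (lhLen p : ℝ)) / 2 ^ (3 + lhLen p)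
        < ((lhTail p : ℝ) + 2 * (lhLen p : ℝ) - 1) / (p : ℝ) ∧
      ((lhTail p : ℝ) + 2 * (lhLen p : ℝ) - 1) / (p : ℝ)
        < (3 + 2 * (lhLen p : ℝ)) / 2 ^ (2 + lhLen p) :=
  ratio_bounds_of_gap_large_general p N e h7 hN hanti hpos hexp hgap
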